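/- arXiv:1006.0116 — 3 statements merged into one kernel-verified Lean document; each statement's English description precedes it below -/
import Mathlib

section
/- The polynomial N = ∏_{s ∈ F_p} (a3 + 3s a2 + 3s² a1 + s³ a0) is isobaric of weight 3 modulo p − 1; moreover N is homogeneous of degree p and its lead monomial in the graded reverse lexicographic order with a0 < a1 < a2 < a3 is a3^p. -/
open MvPolynomial

noncomputable section

/-- The right action of the 2×2 matrix `g` over `F_p` on `F[V] = F[a₃,a₂,a₁,a₀]`
(with `aᵢ = X i`), given by the dual of the third symmetric power representation. -/
def act (p : ℕ) [Fact p.Prime] (F : Type) [Field F] [CharP F p]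
    (g : Matrix (Fin 2) (Fin 2) (ZMod p)) :
    MvPolynomial (Fin 4) F →ₐ[F] MvPolynomial (Fin 4) F :=
  letI c : ZMod p → MvPolynomial (Fin 4) F := fun x => C (ZMod.castHom (dvd_refl p) F x)
  letI al := c (g 0 0)
  letI be := c (g 0 1)
  letI ga := c (g 1 0)
  letI de := c (g 1 1)
  aeval ![
    de ^ 3 * X 0 + 3 * de ^ 2 * ga * X 1 + 3 * de * ga ^ 2 * X 2 + ga ^ 3 * X 3,
    de ^ 2 * be * X 0 + (de ^ 2 * al + 2 * de * be * ga) * X 1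
      + (2 * de * ga * al + be * ga ^ 2) * X 2 + ga ^ 2 * al * X 3,
    de * be ^ 2 * X 0 + (2 * de * be * al + be ^ 2 * ga) * X 1
      + (de * al ^ 2 + 2 * be * ga * al) * X 2 + ga * al ^ 2 * X 3,
    be ^ 3 * X 0 + 3 * be ^ 2 * al * X 1 + 3 * be * al ^ 2 * X 2 + al ^ 3 * X 3]

/-- The transfer with respect to the Sylow `p`-subgroup `P = ⟨σ⟩`,
`tr^P(f) = ∑_{τ ∈ P} (f)τ`, where the elements of `P` are the matrices `[[1,s],[0,1]]`. -/
def trP (p : ℕ) [Fact p.Prime] (F : Type) [Field F] [CharP F p]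
    (f : MvPolynomial (Fin 4) F) : MvPolynomial (Fin 4) F :=
  ∑ s : ZMod p, act p F !![1, s; 0, 1] f

/-- The relative transfer `tr_B^G(f) = ∑_{τ ∈ Q ∪ {η}} (f)τ`, using the coset
representatives `Q ∪ {η}` of the Borel subgroup `B` in `G = SL₂(F_p)`. -/
def trBG (p : ℕ) [Fact p.Prime] (F : Type) [Field F] [CharP F p]
    (f : MvPolynomial (Fin 4) F) : MvPolynomial (Fin 4) F :=
  (∑ s : ZMod p, act p F !![1, 0; s, 1] f) + act p F !![0, 1; -1, 0] f

/-- The full transfer `tr^G(f) = ∑_{τ ∈ SL₂(F_p)} (f)τ`. -/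
def trG (p : ℕ) [Fact p.Prime] (F : Type) [Field F] [CharP F p]
    (f : MvPolynomial (Fin 4) F) : MvPolynomial (Fin 4) F :=
  ∑ g : Matrix.SpecialLinearGroup (Fin 2) (ZMod p), act p F g.1 f

/-- `N = ∏_{τ ∈ P} (a₃)τ = ∏_{s ∈ F_p} (a₃ + 3s a₂ + 3s² a₁ + s³ a₀)`. -/
def Npoly (p : ℕ) [Fact p.Prime] (F : Type) [Field F] [CharP F p] :
    MvPolynomial (Fin 4) F :=
  ∏ s : ZMod p, act p F !![1, s; 0, 1] (X 3)

/-- The weight of the monomial `a₃^e₃ a₂^e₂ a₁^e₁ a₀^e₀`, i.e. `3e₃ + e₂ - e₁ - 3e₀`. -/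
def wt (d : Fin 4 →₀ ℕ) : ℤ :=
  3 * (d 3 : ℤ) + (d 2 : ℤ) - (d 1 : ℤ) - 3 * (d 0 : ℤ)

/-- `f` is isobaric of weight `lam` modulo `p - 1`: every monomial occurring in `f`
has weight congruent to `lam` modulo `p - 1`. -/
def Isobaric (p : ℕ) {F : Type} [Field F] (f : MvPolynomial (Fin 4) F) (lam : ℤ) : Prop :=
  ∀ d ∈ f.support, ((p : ℤ) - 1) ∣ (wt d - lam)

/-- Strict grevlex comparison on exponent vectors, for the graded reverse
lexicographic order with `a₀ < a₁ < a₂ < a₃`. -/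
def grevlexLt (d e : Fin 4 →₀ ℕ) : Prop :=
  (∑ i : Fin 4, d i) < (∑ i : Fin 4, e i) ∨
    ((∑ i : Fin 4, d i) = (∑ i : Fin 4, e i) ∧
      ∃ k : Fin 4, e k < d k ∧ ∀ j : Fin 4, j < k → d j = e j)

/-- `d` is the lead monomial of `f` in the grevlex order with `a₀ < a₁ < a₂ < a₃`. -/
def LeadMonomialIs {F : Type} [Field F] (f : MvPolynomial (Fin 4) F) (d : Fin 4 →₀ ℕ) : Prop :=
  coeff d f ≠ 0 ∧ ∀ e ∈ f.support, e ≠ d → grevlexLt e d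

/-- The lead term of `f` is `c · x^d` in the grevlex order with `a₀ < a₁ < a₂ < a₃`. -/
def LeadTermIs {F : Type} [Field F] (f : MvPolynomial (Fin 4) F) (c : F) (d : Fin 4 →₀ ℕ) :
    Prop :=
  LeadMonomialIs f d ∧ coeff d f = c

/-- The discriminant `D` of the binary cubic. -/
def Dpoly (F : Type) [Field F] : MvPolynomial (Fin 4) F :=
  3 * X 2 ^ 2 * X 1 ^ 2 - 4 * X 3 * X 1 ^ 3 - 4 * X 2 ^ 3 * X 0
    + 6 * X 3 * X 2 * X 1 * X 0 - X 3 ^ 2 * X 0 ^ 2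

/-- `K = -tr^G(a₁^{p-1})`. -/
def Kpoly (p : ℕ) [Fact p.Prime] (F : Type) [Field F] [CharP F p] :
    MvPolynomial (Fin 4) F :=
  - trG p F (X 1 ^ (p - 1))

/-- Dickson's invariant `L = 3(a₂^p a₁ - a₂ a₁^p) - (a₃^p a₀ - a₃ a₀^p)`. -/
def Lpoly (p : ℕ) (F : Type) [Field F] : MvPolynomial (Fin 4) F :=
  3 * (X 2 ^ p * X 1 - X 2 * X 1 ^ p) - (X 3 ^ p * X 0 - X 3 * X 0 ^ p)

/-- `e = 2a₁³ + a₀(a₃a₀ - 3a₂a₁)`. -/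
def epoly (F : Type) [Field F] : MvPolynomial (Fin 4) F :=
  2 * X 1 ^ 3 + X 0 * (X 3 * X 0 - 3 * X 2 * X 1)

/-- `d = a₁² - a₂a₀`. -/
def dpoly (F : Type) [Field F] : MvPolynomial (Fin 4) F :=
  X 1 ^ 2 - X 2 * X 0

/-- `ξ = 3a₂² - 4a₃a₁`. -/
def xipoly (F : Type) [Field F] : MvPolynomial (Fin 4) F :=
  3 * X 2 ^ 2 - 4 * X 3 * X 1

/-- The ring of `SL₂(F_p)`-invariants `F[V]^{SL₂(F_p)}`, as a subalgebra of `F[V]`. -/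
def invariants (p : ℕ) [Fact p.Prime] (F : Type) [Field F] [CharP F p] :
    Subalgebra F (MvPolynomial (Fin 4) F) where
  carrier := {f | ∀ g : Matrix.SpecialLinearGroup (Fin 2) (ZMod p), act p F g.1 f = f}
  mul_mem' := fun hf hg g => by rw [map_mul, hf g, hg g]
  one_mem' := fun g => map_one _
  add_mem' := fun hf hg g => by rw [map_add, hf g, hg g]
  zero_mem' := fun g => map_zero _
  algebraMap_mem' := fun c g => (act _ _ _).commutes c

/-!
`N` is a product of `p` linear forms, each equal to `1` at `a₃ = 1, a₀ = a₁ = a₂ = 0`. Hence `N`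
is homogeneous of degree `p` with coefficient `1` at `a₃^p`, which is the grevlex-largest monomial
of degree `p`.

For isobaricity, the substitution `aᵢ ↦ w^{2i} aᵢ` (that is, `ω³ρ_ω` for `w = ω`) maps the factor
at `s` to `w⁶` times the factor at `s w⁻²`. Since `s ↦ s w⁻²` permutes `F_p`, `N` is an
eigenvector with eigenvalue `w^{6p}`, so every monomial `a^e` of `N` has `w^{2e₁+4e₂+6e₃} = w^{6p}`.
Taking `w` a generator of `F_p^*` gives `2e₁ + 4e₂ + 6e₃ ≡ 6p (mod p - 1)`, and together with
`e₀ + e₁ + e₂ + e₃ = p` this says `wt e ≡ 3`.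
-/

namespace MvPolynomial

variable {σ R : Type*} [CommSemiring R]

theorem coeff_aeval_C_mul_X (c : σ → R) (f : MvPolynomial σ R) (d : σ →₀ ℕ) :
    coeff d (aeval (fun i => C (c i) * X i) f) = (d.prod fun i k => c i ^ k) * coeff d f := by
  classical
  induction f using MvPolynomial.induction_on' with
  | monomial u a =>
    have hu : (u.prod fun i k => (C (c i) * X i : MvPolynomial σ R) ^ k)
        = monomial u (u.prod fun i k => c i ^ k) := by
      simp only [mul_pow, Finsupp.prod_mul, monomial_eq, ← C_pow, ← map_finsuppProd]
    rw [aeval_monomial, hu, algebraMap_eq, C_mul_monomial, coeff_monomial, coeff_monomial]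
    split_ifs with h
    · rw [h, mul_comm]
    · rw [mul_zero]
  | add f g hf hg => rw [map_add, coeff_add, coeff_add, hf, hg, mul_add]

theorem IsHomogeneous.coeff_single_eq_eval [DecidableEq σ] {f : MvPolynomial σ R} {n : ℕ}
    (hf : f.IsHomogeneous n) (i : σ) :
    coeff (Finsupp.single i n) f = eval (Pi.single i 1) f := by
  rw [eval_eq, Finset.sum_eq_single (Finsupp.single i n)]
  · rw [Finset.prod_eq_one, mul_one]
    intro j hj
    rw [Finset.mem_singleton.mp (Finsupp.support_single_subset hj), Pi.single_eq_same, one_pow]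
  · intro d hd hne
    have hsupp : ¬ d.support ⊆ {i} := by
      rw [Finsupp.support_subset_singleton]
      intro hd'
      refine hne (hd'.trans (congrArg _ ?_))
      have := hf (mem_support_iff.mp hd)
      rw [hd'] at this
      simpa [Finsupp.weight_single] using this
    obtain ⟨j, hj, hji⟩ := Finset.not_subset.mp hsupp
    have hxj : (Pi.single i 1 : σ → R) j ^ d j = 0 := by
      rw [Pi.single_eq_of_ne (by simpa using hji), zero_pow (Finsupp.mem_support_iff.mp hj)]
    rw [Finset.prod_eq_zero hj hxj, mul_zero]
  · intro hi
    rw [notMem_support_iff.mp hi, zero_mul]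

theorem IsHomogeneous.sum_eq_of_mem_support [Fintype σ] {f : MvPolynomial σ R} {n : ℕ}
    (hf : f.IsHomogeneous n) {d : σ →₀ ℕ} (hd : d ∈ f.support) : ∑ i, d i = n := by
  rw [← Finsupp.degree_eq_sum, Finsupp.degree_eq_weight_one]
  exact hf (mem_support_iff.mp hd)

end MvPolynomial

theorem grevlexLt_single_three {e : Fin 4 →₀ ℕ} {n : ℕ} (he : ∑ i, e i = n)
    (hne : e ≠ Finsupp.single 3 n) : grevlexLt e (Finsupp.single 3 n) := by
  rw [Fin.sum_univ_four] at he
  have hlow : ¬ (e 0 = 0 ∧ e 1 = 0 ∧ e 2 = 0) := by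
    rintro ⟨h0, h1, h2⟩
    refine hne (Finsupp.ext fun i => ?_)
    fin_cases i <;> simp [h0, h1, h2]
    omega
  refine Or.inr ⟨by simp [Fin.sum_univ_four, he], ?_⟩
  obtain h0 | h0 := (e 0).eq_zero_or_pos
  · obtain h1 | h1 := (e 1).eq_zero_or_pos
    · refine ⟨2, by simp; omega, fun j hj => ?_⟩
      fin_cases j <;> simp_all
    · refine ⟨1, by simpa using h1, fun j hj => ?_⟩
      fin_cases j <;> simp_all
  · exact ⟨0, by simpa using h0, fun j hj => absurd hj (Fin.not_lt_zero j)⟩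

theorem leadMonomialIs_single_three {F : Type} [Field F] {f : MvPolynomial (Fin 4) F} {n : ℕ}
    (hf : f.IsHomogeneous n) (hn : coeff (Finsupp.single 3 n) f ≠ 0) :
    LeadMonomialIs f (Finsupp.single 3 n) :=
  ⟨hn, fun _ he hne => grevlexLt_single_three (hf.sum_eq_of_mem_support he) hne⟩

section translate

variable {R : Type*} [CommSemiring R]

def translateA3 (t : R) : MvPolynomial (Fin 4) R :=
  X 3 + C (3 * t) * X 2 + C (3 * t ^ 2) * X 1 + C (t ^ 3) * X 0

theorem isHomogeneous_translateA3 (t : R) : (translateA3 t).IsHomogeneous 1 :=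
  (((isHomogeneous_X R 3).add (isHomogeneous_C_mul_X _ 2)).add
    (isHomogeneous_C_mul_X _ 1)).add (isHomogeneous_C_mul_X _ 0)

theorem eval_translateA3 (t : R) : eval (Pi.single 3 1) (translateA3 t) = 1 := by
  simp [translateA3]

def torusScale (w : R) : MvPolynomial (Fin 4) R →ₐ[R] MvPolynomial (Fin 4) R :=
  aeval fun i => C (w ^ (2 * (i : ℕ))) * X i

theorem coeff_torusScale (w : R) (f : MvPolynomial (Fin 4) R) (d : Fin 4 →₀ ℕ) :
    coeff d (torusScale w f) = w ^ (2 * d 1 + 4 * d 2 + 6 * d 3) * coeff d f := by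
  rw [torusScale, coeff_aeval_C_mul_X, Finsupp.prod_fintype _ _ (fun _ => pow_zero _),
    Fin.prod_univ_four]
  simp only [Fin.val_zero, Fin.val_one, Fin.val_two, show ((3 : Fin 4) : ℕ) = 3 from rfl,
    ← pow_mul, ← pow_add]
  ring_nf

theorem torusScale_translateA3 (w t : R) :
    torusScale w (translateA3 (t * w ^ 2)) = C (w ^ 6) * translateA3 t := by
  simp only [torusScale, translateA3, map_add, map_mul, aeval_X, aeval_C, algebraMap_eq,
    Fin.val_zero, Fin.val_one, Fin.val_two, show ((3 : Fin 4) : ℕ) = 3 from rfl]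
  simp only [C_mul, C_pow, map_ofNat]
  ring

theorem pow_eq_of_torusScale_eq_C_mul {R : Type*} [CommSemiring R] [IsDomain R] {w : R}
    {f : MvPolynomial (Fin 4) R} {m : ℕ} (h : torusScale w f = C (w ^ m) * f) {d : Fin 4 →₀ ℕ}
    (hd : d ∈ f.support) : w ^ (2 * d 1 + 4 * d 2 + 6 * d 3) = w ^ m := by
  have hcoeff := congrArg (coeff d) h
  rw [coeff_torusScale, coeff_C_mul] at hcoeff
  exact mul_right_cancel₀ (mem_support_iff.mp hd) hcoeff

end translate

section Npoly

variable (p : ℕ) [Fact p.Prime] (F : Type) [Field F] [CharP F p]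

local notation "ι" => ZMod.castHom (dvd_refl p) F

theorem act_upperUnitriangular_X_three (s : ZMod p) :
    act p F !![1, s; 0, 1] (X 3) = translateA3 (ι s) := by
  simp only [act, aeval_X, Matrix.of_apply, Matrix.cons_val', Matrix.cons_val_zero,
    Matrix.cons_val_one, Matrix.cons_val_fin_one, Matrix.cons_val, map_one, map_zero,
    translateA3, C_mul, C_pow, map_ofNat]
  ring

theorem Npoly_eq_prod : Npoly p F = ∏ s : ZMod p, translateA3 (ι s) := by
  simp only [Npoly, act_upperUnitriangular_X_three]

theorem Npoly_isHomogeneous : (Npoly p F).IsHomogeneous p := by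
  simpa [Npoly_eq_prod, ZMod.card] using
    IsHomogeneous.prod Finset.univ _ (fun _ => 1) fun s _ => isHomogeneous_translateA3 (ι s)

theorem coeff_Npoly_single_three : coeff (Finsupp.single 3 p) (Npoly p F) = 1 := by
  rw [(Npoly_isHomogeneous p F).coeff_single_eq_eval, Npoly_eq_prod, map_prod]
  simp only [eval_translateA3, Finset.prod_const_one]

theorem torusScale_Npoly (ω : (ZMod p)ˣ) :
    torusScale (ι ω) (Npoly p F) = C (ι ω ^ (6 * p)) * Npoly p F := by
  rw [Npoly_eq_prod, map_prod, ← Equiv.prod_comp (Units.mulRight (ω ^ 2))]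
  simp only [Units.mulRight_apply, map_mul, map_pow, Units.val_pow_eq_pow_val,
    torusScale_translateA3]
  rw [Finset.prod_mul_distrib, Finset.prod_const, Finset.card_univ, ZMod.card, pow_mul]

theorem orderOf_castHom_of_generator {g : (ZMod p)ˣ} (hg : ∀ x, x ∈ Subgroup.zpowers g) :
    orderOf (ι g) = p - 1 := by
  calc orderOf (ι g)
      _ = orderOf (g : ZMod p) := orderOf_injective (ι : ZMod p →* F) (ι).injective g
      _ = p - 1 := by
        rw [orderOf_units, orderOf_eq_card_of_forall_mem_zpowers hg, Nat.card_eq_fintype_card,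
          ZMod.card_units]

theorem modEq_of_mem_support_Npoly {d : Fin 4 →₀ ℕ} (hd : d ∈ (Npoly p F).support) :
    2 * d 1 + 4 * d 2 + 6 * d 3 ≡ 6 * p [MOD p - 1] := by
  obtain ⟨g, hg⟩ := IsCyclic.exists_generator (α := (ZMod p)ˣ)
  have hfin : IsOfFinOrder (ι g) := by
    rw [← orderOf_pos_iff, orderOf_castHom_of_generator p F hg]
    exact Nat.sub_pos_of_lt (Fact.out : p.Prime).one_lt
  rw [← orderOf_castHom_of_generator p F hg, ← hfin.pow_eq_pow_iff_modEq]
  exact pow_eq_of_torusScale_eq_C_mul (torusScale_Npoly p F g) hd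

theorem Npoly_isobaric : Isobaric p (Npoly p F) 3 := by
  intro d hd
  have hdeg := (Npoly_isHomogeneous p F).sum_eq_of_mem_support hd
  have hdvd := Nat.modEq_iff_dvd.mp (modEq_of_mem_support_Npoly p F hd)
  rw [Nat.cast_sub (Fact.out : p.Prime).one_le] at hdvd
  push_cast at hdvd
  have hwt : wt d - 3 = 3 * ((p : ℤ) - 1) - (6 * p - (2 * d 1 + 4 * d 2 + 6 * d 3)) := by
    rw [Fin.sum_univ_four] at hdeg
    rw [wt, ← hdeg]
    push_cast
    ring
  rw [hwt]
  exact (dvd_mul_left _ _).sub hdvd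

end Npoly

theorem Npoly_isobaric_homogeneous_leadMonomial_general (p : ℕ) [Fact p.Prime]
    (F : Type) [Field F] [CharP F p] :
    Isobaric p (Npoly p F) 3 ∧ (Npoly p F).IsHomogeneous p ∧
      LeadMonomialIs (Npoly p F) (Finsupp.single 3 p) :=
  ⟨Npoly_isobaric p F, Npoly_isHomogeneous p F,
    leadMonomialIs_single_three (Npoly_isHomogeneous p F)
      (by rw [coeff_Npoly_single_three]; exact one_ne_zero)⟩

/-- `N = ∏_{s ∈ F_p} (a₃ + 3s a₂ + 3s² a₁ + s³ a₀)` is isobaric of weight `3`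
modulo `p - 1`, homogeneous of degree `p`, and its lead monomial in the grevlex order with
`a₀ < a₁ < a₂ < a₃` is `a₃^p`. -/
theorem Npoly_isobaric_homogeneous_leadMonomial (p : ℕ) [Fact p.Prime] (hp : 3 < p)
    (F : Type) [Field F] [CharP F p] :
    Isobaric p (Npoly p F) 3 ∧ (Npoly p F).IsHomogeneous p ∧
      LeadMonomialIs (Npoly p F) (Finsupp.single 3 p) :=
  Npoly_isobaric_homogeneous_leadMonomial_general p F

end
end

section
/- The polynomial N · a0 is invariant under the action of SL2(F_p); that is, N · a0 ∈ F[V]^{SL2(F_p)}. -/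
open MvPolynomial

noncomputable section

/-! The `p + 1` linear factors `(a₃)σˢ` (`s ∈ F_p`) and `a₀` of `N · a₀` are permuted up to
scalars by each generator of `SL₂(F_p)`. A unipotent `[[1,t],[0,1]]` shifts `s`; a diagonal
`[[a,0],[0,a⁻¹]]` rescales `s` and contributes the scalar `a^{3p} · a^{-3} = 1` (Fermat); the
Weyl element `[[0,1],[-1,0]]` sends `a₃ ↦ a₀ ↦ -a₃` and `s ↦ -s⁻¹` for `s ≠ 0` with scalar
`(-s)³`, and `∏_{s ≠ 0} (-s) = -1` (Wilson) cancels the sign. Lower unipotents are conjugates of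
upper ones by the Weyl element, and `SL₂(F_p)` is generated by transvections and diagonals. -/

section Matrices

variable {R : Type*} [CommRing R]

theorem Matrix.unipotent_mul_diagonal {a d : R} (s : R) (h : a * d = 1) :
    !![1, s; 0, 1] * !![a, 0; 0, d] = !![a, 0; 0, d] * !![1, s * (d * d); 0, 1] := by
  have : s * d = a * (s * (d * d)) := by linear_combination (-(s * d)) * h
  simp [this]

theorem Matrix.unipotent_mul_weyl {K : Type*} [Field K] {s : K} (hs : s ≠ 0) :
    !![1, s; 0, 1] * !![0, 1; -1, 0] = !![-s, 0; -1, -s⁻¹] * !![1, -s⁻¹; 0, 1] := by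
  simp [hs]

theorem Matrix.weyl_mul_unipotent_mul_weyl (c : R) :
    !![0, 1; -1, 0] * !![1, -c; 0, 1] * !![0, 1; -1, 0] * !![-1, 0; 0, -1] = !![1, 0; c, 1] := by
  simp

theorem Matrix.transvection_zero_one (c : R) :
    Matrix.transvection (0 : Fin 2) 1 c = !![1, c; 0, 1] := by
  ext i j
  fin_cases i <;> fin_cases j <;> simp [Matrix.transvection]

theorem Matrix.transvection_one_zero (c : R) :
    Matrix.transvection (1 : Fin 2) 0 c = !![1, 0; c, 1] := by
  ext i j
  fin_cases i <;> fin_cases j <;> simp [Matrix.transvection]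

end Matrices

theorem FiniteField.prod_univ_units_neg_eq_neg_one {K : Type*} [Field K] [Fintype K]
    [DecidableEq K] :
    ∏ u : Kˣ, -(u : K) = -1 := by
  calc ∏ u : Kˣ, -(u : K) = ((∏ u : Kˣ, u : Kˣ) : K) := by
        rw [Units.coe_prod]
        exact Fintype.prod_equiv (Equiv.neg Kˣ) _ _ (fun u => by simp)
    _ = -1 := by simp [FiniteField.prod_univ_units_id_eq_neg_one]

theorem Fintype.prod_eq_mul_prod_units {K M : Type*} [Field K] [Fintype K] [DecidableEq K]
    [CommMonoid M] (f : K → M) : ∏ s, f s = f 0 * ∏ u : Kˣ, f u := by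
  rw [Fintype.prod_eq_mul_prod_subtype_ne f 0]
  congr 1
  exact (Fintype.prod_equiv unitsEquivNeZero _ _ (fun _ => rfl)).symm

section Action

variable {p : ℕ} [Fact p.Prime] {F : Type} [Field F] [CharP F p]

local notation "ι" => ZMod.castHom (dvd_refl p) F

theorem act_mul (g h : Matrix (Fin 2) (Fin 2) (ZMod p)) :
    act p F (g * h) = (act p F h).comp (act p F g) := by
  refine MvPolynomial.algHom_ext fun i => ?_
  fin_cases i <;>
    · simp only [Fin.reduceFinMk, act, AlgHom.coe_comp, Function.comp_apply, aeval_X,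
        Matrix.cons_val_zero, Matrix.cons_val_one, Matrix.cons_val_two, Matrix.cons_val_three,
        Matrix.head_cons, Matrix.tail_cons, map_add, map_mul, map_pow, map_ofNat, aeval_C,
        MvPolynomial.algebraMap_eq,
        Matrix.mul_apply, Fin.sum_univ_two]
      ring

theorem act_act (g h : Matrix (Fin 2) (Fin 2) (ZMod p)) (f : MvPolynomial (Fin 4) F) :
    act p F h (act p F g f) = act p F (g * h) f := by
  rw [act_mul, AlgHom.comp_apply]

theorem act_one : act p F 1 = AlgHom.id F (MvPolynomial (Fin 4) F) := by
  refine MvPolynomial.algHom_ext fun i => ?_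
  fin_cases i <;> simp [act]

theorem act_C (g : Matrix (Fin 2) (Fin 2) (ZMod p)) (k : F) : act p F g (C k) = C k :=
  (act p F g).commutes k

theorem act_lowerTriangular_X_three (a c d : ZMod p) :
    act p F !![a, 0; c, d] (X 3) = C (ι a) ^ 3 * X 3 := by
  simp [act]

theorem act_upperTriangular_X_zero (a b d : ZMod p) :
    act p F !![a, b; 0, d] (X 0) = C (ι d) ^ 3 * X 0 := by
  simp [act]

theorem act_weyl_X_three : act p F !![0, 1; -1, 0] (X 3) = X 0 := by
  simp [act]

theorem act_weyl_X_zero : act p F !![0, 1; -1, 0] (X 0) = -X 3 := by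
  simp [act, pow_succ]

theorem act_list_prod_eq_self {f : MvPolynomial (Fin 4) F}
    {L : List (Matrix (Fin 2) (Fin 2) (ZMod p))} (hL : ∀ g ∈ L, act p F g f = f) :
    act p F L.prod f = f := by
  induction L with
  | nil => simp [act_one]
  | cons g L ih =>
    rw [List.prod_cons, ← act_act, hL g List.mem_cons_self,
      ih fun h hh => hL h (List.mem_cons_of_mem g hh)]

theorem act_unipotent_X_three_of_mul_eq {g : Matrix (Fin 2) (Fin 2) (ZMod p)} {s t a c d : ZMod p}
    (h : !![1, s; 0, 1] * g = !![a, 0; c, d] * !![1, t; 0, 1]) :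
    act p F g (act p F !![1, s; 0, 1] (X 3)) = C (ι a) ^ 3 * act p F !![1, t; 0, 1] (X 3) := by
  rw [act_act, h, ← act_act, act_lowerTriangular_X_three, map_mul, map_pow, act_C]

theorem act_prod_unipotent_X_three_of_mul_eq {I : Type*} [Fintype I]
    {g : Matrix (Fin 2) (Fin 2) (ZMod p)} (s a : I → ZMod p) (e : I ≃ I)
    (h : ∀ i, ∃ c d, !![1, s i; 0, 1] * g = !![a i, 0; c, d] * !![1, s (e i); 0, 1]) :
    act p F g (∏ i, act p F !![1, s i; 0, 1] (X 3))
      = C (ι (∏ i, a i)) ^ 3 * ∏ i, act p F !![1, s i; 0, 1] (X 3) := by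
  have hfactor i : act p F g (act p F !![1, s i; 0, 1] (X 3))
      = C (ι (a i)) ^ 3 * act p F !![1, s (e i); 0, 1] (X 3) := by
    obtain ⟨c, d, hi⟩ := h i
    exact act_unipotent_X_three_of_mul_eq hi
  rw [map_prod, Fintype.prod_congr _ _ hfactor, Finset.prod_mul_distrib, Finset.prod_pow,
    map_prod, map_prod, Fintype.prod_equiv e (fun i => act p F !![1, s (e i); 0, 1] (X 3))
      (fun i => act p F !![1, s i; 0, 1] (X 3)) fun _ => rfl]

theorem act_unipotent_Npoly_mul_X_zero (t : ZMod p) :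
    act p F !![1, t; 0, 1] (Npoly p F * X 0) = Npoly p F * X 0 := by
  have hN := act_prod_unipotent_X_three_of_mul_eq (F := F) (g := !![1, t; 0, 1]) (fun s => s) 1
    (Equiv.addRight t)
    fun s => ⟨0, 1, by simp [add_comm]⟩
  simp only [Pi.one_apply, Finset.prod_const_one, map_one, one_pow, one_mul] at hN
  rw [map_mul, Npoly, hN, act_upperTriangular_X_zero, map_one, C_1, one_pow, one_mul]

theorem act_diagonal_Npoly_mul_X_zero {a d : ZMod p} (h : a * d = 1) :
    act p F !![a, 0; 0, d] (Npoly p F * X 0) = Npoly p F * X 0 := by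
  have hd : d ≠ 0 := right_ne_zero_of_mul_eq_one h
  have hN := act_prod_unipotent_X_three_of_mul_eq (F := F) (g := !![a, 0; 0, d]) (fun s => s)
    (fun _ => a) (Equiv.mulRight₀ (d * d) (mul_ne_zero hd hd))
    fun s => ⟨0, d, by simpa using Matrix.unipotent_mul_diagonal s h⟩
  have hscalar : C (ι a) ^ 3 * C (ι d) ^ 3 = (1 : MvPolynomial (Fin 4) F) := by
    rw [← mul_pow, ← map_mul, ← map_mul, h, map_one, map_one, one_pow]
  rw [Finset.prod_const, Finset.card_univ, ZMod.card, ZMod.pow_card] at hN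
  rw [map_mul, Npoly, hN, act_upperTriangular_X_zero, mul_mul_mul_comm, hscalar, one_mul]

theorem act_weyl_Npoly_mul_X_zero :
    act p F !![0, 1; -1, 0] (Npoly p F * X 0) = Npoly p F * X 0 := by
  have hsplit : Npoly p F = X 3 * ∏ u : (ZMod p)ˣ, act p F !![1, (u : ZMod p); 0, 1] (X 3) := by
    rw [Npoly, Fintype.prod_eq_mul_prod_units]
    simp [act]
  have hQ := act_prod_unipotent_X_three_of_mul_eq (F := F) (g := !![0, 1; -1, 0])
    (fun u : (ZMod p)ˣ => (u : ZMod p)) (fun u => -u) ((Equiv.inv _).trans (Equiv.neg _))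
    fun u => ⟨-1, -(u : ZMod p)⁻¹, by
      rw [Matrix.unipotent_mul_weyl u.ne_zero, Equiv.trans_apply, Equiv.inv_apply, Equiv.neg_apply,
        Units.val_neg, Units.val_inv_eq_inv_val]⟩
  rw [FiniteField.prod_univ_units_neg_eq_neg_one] at hQ
  rw [hsplit, map_mul, map_mul, hQ, act_weyl_X_three, act_weyl_X_zero, map_neg, map_one, C_neg,
    C_1]
  ring

theorem act_lowerUnipotent_Npoly_mul_X_zero (c : ZMod p) :
    act p F !![1, 0; c, 1] (Npoly p F * X 0) = Npoly p F * X 0 := by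
  rw [← Matrix.weyl_mul_unipotent_mul_weyl c, ← act_act, ← act_act, ← act_act,
    act_weyl_Npoly_mul_X_zero, act_unipotent_Npoly_mul_X_zero, act_weyl_Npoly_mul_X_zero,
    act_diagonal_Npoly_mul_X_zero (by norm_num)]

theorem act_transvection_Npoly_mul_X_zero {i j : Fin 2} (hij : i ≠ j) (c : ZMod p) :
    act p F (Matrix.transvection i j c) (Npoly p F * X 0) = Npoly p F * X 0 := by
  fin_cases i <;> fin_cases j <;> simp only [Fin.zero_eta, Fin.mk_one, ne_eq, not_true] at hij ⊢
  · rw [Matrix.transvection_zero_one, act_unipotent_Npoly_mul_X_zero]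
  · rw [Matrix.transvection_one_zero, act_lowerUnipotent_Npoly_mul_X_zero]

end Action

theorem Npoly_mul_a0_invariant_general (p : ℕ) [Fact p.Prime]
    (F : Type) [Field F] [CharP F p] :
    ∀ g : Matrix.SpecialLinearGroup (Fin 2) (ZMod p),
      act p F g.1 (Npoly p F * X 0) = Npoly p F * X 0 := by
  intro g
  obtain ⟨L, L', D, hg⟩ := Matrix.Pivot.exists_list_transvec_mul_diagonal_mul_list_transvec g.1
  have hD : D 0 * D 1 = 1 := by
    simpa [hg, Matrix.det_diagonal, Fin.prod_univ_two] using g.2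
  have hL (L : List (Matrix.TransvectionStruct (Fin 2) (ZMod p))) :
      ∀ t ∈ L.map Matrix.TransvectionStruct.toMatrix,
        act p F t (Npoly p F * X 0) = Npoly p F * X 0 := by
    simp only [List.mem_map]
    rintro _ ⟨t, -, rfl⟩
    exact act_transvection_Npoly_mul_X_zero t.hij t.c
  rw [hg, ← act_act, ← act_act, act_list_prod_eq_self (hL L), Matrix.diagonal_fin_two,
    act_diagonal_Npoly_mul_X_zero hD, act_list_prod_eq_self (hL L')]

/-- `N · a₀` is invariant under the action of `SL₂(F_p)`. -/
theorem Npoly_mul_a0_invariant (p : ℕ) [Fact p.Prime] (hp : 3 < p)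
    (F : Type) [Field F] [CharP F p] :
    ∀ g : Matrix.SpecialLinearGroup (Fin 2) (ZMod p),
      act p F g.1 (Npoly p F * X 0) = Npoly p F * X 0 :=
  Npoly_mul_a0_invariant_general p F

end
end

section
/- tr^P(a3^{p−2}) ≡ 6 a1 (3ξ)^{(p−3)/2} modulo the ideal generated by a0, where ξ = 3a2² − 4a3a1. -/
open MvPolynomial

noncomputable section

/-!
Modulo `a₀`, the image of `a₃` under `[[1,s],[0,1]]` is the quadratic
`q(s) = a + b s + c s²` with `a = a₃`, `b = 3a₂`, `c = 3a₁`, so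
`tr^P(a₃^{p-2}) ≡ ∑_s q(s)^{p-2}`.
Completing the square, `4c · q(s) = (2cs + b)² - D` with `D = b² - 4ac = 3ξ`. Expand
`((2cs + b)² - D)^{p-2}` binomially: since `∑_{s ∈ F_p} s^j` vanishes for `j < 2(p-1)` unless
`j = p - 1`, only the term `k = (p-1)/2` survives, and `C(p-2, k) ≡ (-1)^k (k+1)` together with
`2^{p-1} = 1` turns it into `(4c)^{p-2} · 2c D^{(p-3)/2}`.
-/

open Finset

theorem Nat.Prime.exists_eq_two_mul_add_three {p : ℕ} (hp : p.Prime) (h2 : p ≠ 2) :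
    ∃ n, p = 2 * n + 3 := by
  obtain ⟨k, hk⟩ := hp.odd_of_ne_two h2
  have := hp.two_le
  exact ⟨k - 1, by omega⟩

namespace FiniteField

variable {K : Type*} [Field K] [Fintype K]

local notation "q" => Fintype.card K

theorem sum_pow_of_lt_two_mul_card_sub_one (j : ℕ) (hj : j < 2 * (q - 1)) :
    ∑ x : K, x ^ j = if j = q - 1 then -1 else 0 := by
  classical
  have hq : 1 < q := Fintype.one_lt_card
  rcases lt_or_ge j (q - 1) with hlt | hge
  · rw [if_neg hlt.ne, sum_pow_lt_card_sub_one K j hlt]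
  obtain ⟨i, rfl⟩ := Nat.exists_eq_add_of_le hge
  have hpow (x : K) : x ^ (q - 1 + i) = x ^ i - if x = 0 then x ^ i else 0 := by
    rcases eq_or_ne x 0 with rfl | hx
    · simp [zero_pow (show q - 1 + i ≠ 0 by omega)]
    · rw [pow_add, pow_card_sub_one_eq_one x hx, one_mul, if_neg hx, sub_zero]
  rw [sum_congr rfl fun x _ => hpow x, sum_sub_distrib, sum_ite_eq' univ (0 : K),
    sum_pow_lt_card_sub_one K i (by omega), if_pos (mem_univ _)]
  rcases eq_or_ne i 0 with rfl | hi
  · simp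
  · simp [hi]

end FiniteField

namespace ZMod

variable {p : ℕ} [Fact p.Prime]

theorem natCast_choose_sub_one (k : ℕ) (hk : k < p) :
    ((p - 1).choose k : ZMod p) = (-1) ^ k := by
  induction k with
  | zero => simp
  | succ k ih =>
    have hpascal := Nat.choose_succ_succ' (p - 1) k
    rw [Nat.sub_add_cancel (Fact.out : p.Prime).one_le] at hpascal
    have hzero : (p.choose (k + 1) : ZMod p) = 0 :=
      (natCast_eq_zero_iff _ _).2 ((Fact.out : p.Prime).dvd_choose_self k.succ_ne_zero hk)
    rw [hpascal, Nat.cast_add, ih (by omega)] at hzero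
    linear_combination hzero

theorem natCast_choose_sub_two (k : ℕ) (hk : k < p) :
    ((p - 2).choose k : ZMod p) = (-1) ^ k * (k + 1) := by
  induction k with
  | zero => simp
  | succ k ih =>
    have hpascal := Nat.choose_succ_succ' (p - 2) k
    rw [show p - 2 + 1 = p - 1 by have := (Fact.out : p.Prime).two_le; omega] at hpascal
    have h := natCast_choose_sub_one (k + 1) hk
    rw [hpascal, Nat.cast_add, ih (by omega)] at h
    push_cast
    linear_combination h

variable {R : Type*} [CommRing R] (f : ZMod p →+* R)

theorem sum_mul_add_pow (u v : R) (m : ℕ) (hm : m < 2 * (p - 1)) :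
    ∑ s : ZMod p, (u * f s + v) ^ m = if m = p - 1 then -u ^ (p - 1) else 0 := by
  have hpow (k : ℕ) (hk : k ≤ m) : ∑ s : ZMod p, f s ^ k = if k = p - 1 then -1 else 0 := by
    simp_rw [← map_pow, ← map_sum]
    rw [FiniteField.sum_pow_of_lt_two_mul_card_sub_one k (by rw [card]; omega), card]
    split_ifs <;> simp
  calc ∑ s : ZMod p, (u * f s + v) ^ m
      = ∑ k ∈ range (m + 1), u ^ k * v ^ (m - k) * m.choose k * ∑ s : ZMod p, f s ^ k := by
        simp_rw [mul_sum]
        rw [sum_comm]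
        refine sum_congr rfl fun s _ => ?_
        rw [add_pow]
        exact sum_congr rfl fun k _ => by ring
    _ = ∑ k ∈ range (m + 1), if k = p - 1 then -(u ^ k * v ^ (m - k) * m.choose k) else 0 :=
        sum_congr rfl fun k hk => by
          rw [hpow k (Nat.lt_succ_iff.mp (mem_range.mp hk))]
          split_ifs <;> ring
    _ = if m = p - 1 then -u ^ (p - 1) else 0 := by
        rw [sum_ite_eq']
        split_ifs with hmem hm'
        · subst hm'; simp
        · have hdvd : p ∣ m.choose (p - 1) := (Fact.out : p.Prime).dvd_choose
            (by omega) (by omega) (by have := mem_range.mp hmem; omega)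
          rw [← map_natCast f, (natCast_eq_zero_iff _ _).2 hdvd]
          simp
        · exact absurd (mem_range.mpr (by omega)) hmem
        · rfl

theorem sum_sq_sub_pow (hp : p ≠ 2) (u v D : R) :
    ∑ s : ZMod p, ((u * f s + v) ^ 2 - D) ^ (p - 2) =
      ((p + 1) / 2 : ℕ) * u ^ (p - 1) * D ^ ((p - 3) / 2) := by
  obtain ⟨n, rfl⟩ := (Fact.out : p.Prime).exists_eq_two_mul_add_three hp
  rw [show 2 * n + 3 - 2 = 2 * n + 1 by omega, show (2 * n + 3 + 1) / 2 = n + 2 by omega,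
    show 2 * n + 3 - 1 = 2 * n + 2 by omega, show (2 * n + 3 - 3) / 2 = n by omega]
  have hbinom : ((2 * n + 1).choose (n + 1) : R) = (-1) ^ (n + 1) * (n + 2) := by
    have h := natCast_choose_sub_two (p := 2 * n + 3) (n + 1) (by omega)
    rw [show 2 * n + 3 - 2 = 2 * n + 1 by omega] at h
    rw [← map_natCast f, h]
    simp only [map_mul, map_pow, map_neg, map_one, map_add, map_natCast]
    push_cast
    ring
  calc ∑ s : ZMod (2 * n + 3), ((u * f s + v) ^ 2 - D) ^ (2 * n + 1)
      = ∑ k ∈ range (2 * n + 2), (-D) ^ (2 * n + 1 - k) * (2 * n + 1).choose k *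
          ∑ s : ZMod (2 * n + 3), (u * f s + v) ^ (2 * k) := by
        simp_rw [mul_sum]
        rw [sum_comm]
        refine sum_congr rfl fun s _ => ?_
        rw [sub_eq_add_neg, add_pow]
        exact sum_congr rfl fun k _ => by rw [pow_mul]; ring
    _ = (-D) ^ n * (2 * n + 1).choose (n + 1) * -u ^ (2 * n + 2) := by
        rw [sum_eq_single (n + 1)]
        · rw [sum_mul_add_pow f _ _ _ (by omega), if_pos (by omega),
            show 2 * n + 3 - 1 = 2 * n + 2 by omega, show 2 * n + 1 - (n + 1) = n by omega]
        · intro k hk _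
          rw [sum_mul_add_pow f _ _ _ (by have := mem_range.mp hk; omega), if_neg (by omega),
            mul_zero]
        · exact fun h => absurd (mem_range.mpr (by omega)) h
    _ = ((n + 2 : ℕ) : R) * u ^ (2 * n + 2) * D ^ n := by
        have hsign : (-1 : R) ^ n * (-1) ^ n = 1 := by rw [← mul_pow]; simp
        rw [hbinom, neg_pow]
        push_cast
        linear_combination (u ^ (2 * n + 2) * D ^ n * (n + 2)) * hsign

theorem sum_quadratic_pow_sub_two [IsDomain R] (hp : p ≠ 2) (a b c : R) :
    ∑ s : ZMod p, (a + b * f s + c * f s ^ 2) ^ (p - 2) =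
      2 * c * (b ^ 2 - 4 * a * c) ^ ((p - 3) / 2) := by
  have hsq := sum_sq_sub_pow f hp (2 * c) b (b ^ 2 - 4 * a * c)
  obtain ⟨n, rfl⟩ := (Fact.out : p.Prime).exists_eq_two_mul_add_three hp
  simp only [show 2 * n + 3 - 2 = 2 * n + 1 by omega, show (2 * n + 3 + 1) / 2 = n + 2 by omega,
    show 2 * n + 3 - 1 = 2 * n + 2 by omega, show (2 * n + 3 - 3) / 2 = n by omega] at hsq ⊢
  rcases eq_or_ne c 0 with rfl | hc
  · have h := sum_mul_add_pow f b a (2 * n + 1) (by omega)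
    rw [if_neg (by omega)] at h
    simpa [add_comm] using h
  have hchar : ((2 * n + 3 : ℕ) : R) = 0 := by rw [← map_natCast f, natCast_self, map_zero]
  have hfermat : (2 : R) ^ (2 * n + 2) = 1 := by
    have h2 : (2 : ZMod (2 * n + 3)) ≠ 0 := fun h => by
      have := Nat.le_of_dvd two_pos ((natCast_eq_zero_iff 2 _).1 (by exact_mod_cast h))
      omega
    rw [← map_ofNat f 2, ← map_pow, show 2 * n + 2 = 2 * n + 3 - 1 by omega,
      pow_card_sub_one_eq_one h2, map_one]
  have h4c : (4 * c) ^ (2 * n + 1) ≠ 0 := by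
    have h2 : (2 : R) ≠ 0 := fun h => by simp [h] at hfermat
    rw [show (4 : R) = 2 * 2 by norm_num]
    exact pow_ne_zero _ (mul_ne_zero (mul_ne_zero h2 h2) hc)
  apply mul_left_cancel₀ h4c
  calc (4 * c) ^ (2 * n + 1) * ∑ s : ZMod (2 * n + 3), (a + b * f s + c * f s ^ 2) ^ (2 * n + 1)
      = ∑ s : ZMod (2 * n + 3), ((2 * c * f s + b) ^ 2 - (b ^ 2 - 4 * a * c)) ^ (2 * n + 1) := by
        rw [mul_sum]
        exact sum_congr rfl fun s _ => by rw [← mul_pow]; ring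
    _ = (4 * c) ^ (2 * n + 1) * (2 * c * (b ^ 2 - 4 * a * c) ^ n) := by
        rw [hsq, mul_pow, hfermat, mul_pow, show (4 : R) = 2 ^ 2 by norm_num, ← pow_mul]
        push_cast at hchar ⊢
        linear_combination -(c ^ (2 * n + 2) * (b ^ 2 - 4 * a * c) ^ n) *
          ((2 ^ (2 * n + 1) + (n : R) + 2) * hfermat - 2 ^ (2 * n + 1) * hchar)

end ZMod

theorem act_unipotent_X3 (p : ℕ) [Fact p.Prime] (F : Type) [Field F] [CharP F p] (s : ZMod p) :
    act p F !![1, s; 0, 1] (X 3) =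
      X 3 + 3 * X 2 * C (ZMod.castHom (dvd_refl p) F s)
        + 3 * X 1 * C (ZMod.castHom (dvd_refl p) F s) ^ 2
        + X 0 * C (ZMod.castHom (dvd_refl p) F s) ^ 3 := by
  simp only [act, aeval_X, Matrix.of_apply, Matrix.cons_val', Matrix.cons_val_zero,
    Matrix.cons_val_one, Matrix.cons_val_fin_one, Matrix.cons_val, map_one, map_zero]
  ring

/-- `tr^P(a₃^{p-2}) ≡ 6 a₁ (3ξ)^{(p-3)/2}` modulo the ideal `(a₀)`,
where `ξ = 3a₂² - 4a₃a₁`. -/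
theorem Ptrlem (p : ℕ) [Fact p.Prime] (hp : 3 < p)
    (F : Type) [Field F] [CharP F p] :
    X 0 ∣ (trP p F (X 3 ^ (p - 2)) - 6 * X 1 * (3 * xipoly F) ^ ((p - 3) / 2)) := by
  have hquad := ZMod.sum_quadratic_pow_sub_two ((C : F →+* MvPolynomial (Fin 4) F).comp
    (ZMod.castHom (dvd_refl p) F)) (by omega) (X 3) (3 * X 2) (3 * X 1)
  simp only [RingHom.coe_comp, Function.comp_apply] at hquad
  have hrhs : 2 * (3 * X 1) * ((3 * X 2) ^ 2 - 4 * X 3 * (3 * X 1)) ^ ((p - 3) / 2) =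
      6 * X 1 * (3 * xipoly F) ^ ((p - 3) / 2) := by
    rw [xipoly]; ring
  rw [← hrhs, ← hquad, trP, ← sum_sub_distrib]
  refine dvd_sum fun s _ => ?_
  rw [map_pow, act_unipotent_X3]
  refine (dvd_mul_right (X 0) (C (ZMod.castHom (dvd_refl p) F s) ^ 3)).trans ?_
  convert sub_dvd_pow_sub_pow _ _ (p - 2) using 1
  ring

end
end
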